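/- arXiv:1906.03715 — 2 statements merged into one kernel-verified Lean document; each statement's English description precedes it below -/
import Mathlib

section
/- For Z as above and real λ, μ, the cross ratio cr([1,0], [-1,1], [0,1], Z[1,1]) equals e^λ e⁺ + e^μ e⁻, and hence its 'logarithm' λe⁺ + μe⁻ equals (λ+μ)/2 + τ(λ-μ)/2. -/
noncomputable section

/-- Model of the algebra `B = ℝ ⊕ τℝ` with `τ² = 1`, realized in the idempotent
basis: the element `a + τ b` corresponds to `(a + b, a - b) ∈ ℝ × ℝ`, with
componentwise ring operations. -/
abbrev BB : Type := ℝ × ℝ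

/-- The generator `τ` of `B`, satisfying `τ² = 1`. -/
def tauB : BB := (1, -1)

/-- The element `a + τ b` of `B`. -/
def bmk (a b : ℝ) : BB := (a + b, a - b)

/-- Conjugation `a + τ b ↦ a - τ b`. -/
def bconj (z : BB) : BB := (z.2, z.1)

/-- The square-norm `|a + τ b|² = a² - b²` (the real number such that
`z * bconj z = algebraMap ℝ BB (bnormSq z)`). -/
def bnormSq (z : BB) : ℝ := z.1 * z.2

/-- The idempotent `e⁺ = (1 + τ)/2`. -/
def eplus : BB := (1, 0)

/-- The idempotent `e⁻ = (1 - τ)/2`. -/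
def eminus : BB := (0, 1)

/-- Real part of `a + τ b`, namely `a`. -/
def bre (z : BB) : ℝ := (z.1 + z.2) / 2

/-- Imaginary part of `a + τ b`, namely `b`. -/
def bim (z : BB) : ℝ := (z.1 - z.2) / 2


/-- The matrix `A·e⁺ + A′·e⁻ ∈ M(2,B)` built from two real 2×2 matrices. -/
def bmat (A A' : Matrix (Fin 2) (Fin 2) ℝ) : Matrix (Fin 2) (Fin 2) BB :=
  A.map (fun x => algebraMap ℝ BB x * eplus) +
    A'.map (fun x => algebraMap ℝ BB x * eminus)

/-- `Z = diag(e^{λ/2}, e^{-λ/2})·e⁺ + diag(e^{μ/2}, e^{-μ/2})·e⁻`. -/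
def zmat (l m : ℝ) : Matrix (Fin 2) (Fin 2) BB :=
  bmat (Matrix.diagonal ![Real.exp (l / 2), Real.exp (-l / 2)])
    (Matrix.diagonal ![Real.exp (m / 2), Real.exp (-m / 2)])

/-- The action of a matrix over `B` on homogeneous coordinates. -/
def mobAct (A : Matrix (Fin 2) (Fin 2) BB) (p : BB × BB) : BB × BB :=
  (A 0 0 * p.1 + A 0 1 * p.2, A 1 0 * p.1 + A 1 1 * p.2)

/-- The "determinant" `x_p y_q - x_q y_p` of two points in homogeneous
coordinates over `B`. -/
def pdet (p q : BB × BB) : BB := p.1 * q.2 - q.1 * p.2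

/-- The cross ratio
`cr(p₁,p₂,p₃,p₄) = (x₂y₁-x₁y₂)(x₄y₃-x₃y₄)·((x₁y₄-x₄y₁)(x₂y₃-x₃y₂))⁻¹`. -/
def crossRatio (p₁ p₂ p₃ p₄ : BB × BB) : BB :=
  pdet p₂ p₁ * pdet p₄ p₃ * Ring.inverse (pdet p₁ p₄ * pdet p₂ p₃)

/-! In the idempotent basis `B ≅ ℝ × ℝ` everything is computed componentwise. `Z[1,1] = [a, a⁻¹]`
with `a = e^{λ/2} e⁺ + e^{μ/2} e⁻`, and the cross ratio of `[1,0], [-1,1], [0,1], [x,y]` is `x y⁻¹`,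
so it equals `a² = e^λ e⁺ + e^μ e⁻`. -/

theorem smul_eplus_add_smul_eminus (a b : ℝ) : a • eplus + b • eminus = (a, b) := by
  ext <;> simp [eplus, eminus]

theorem mobAct_bmat_diagonal_one_one (a b c d : ℝ) :
    mobAct (bmat (Matrix.diagonal ![a, b]) (Matrix.diagonal ![c, d])) (1, 1) = ((a, c), (b, d)) := by
  ext <;> simp [mobAct, bmat, eplus, eminus]

theorem Ring.inverse_prod_mk {K L : Type*} [DivisionRing K] [DivisionRing L] {a : K} {b : L}
    (ha : a ≠ 0) (hb : b ≠ 0) : Ring.inverse (a, b) = (a⁻¹, b⁻¹) := by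
  have hu : IsUnit (a, b) := Prod.isUnit_iff.2 ⟨ha.isUnit, hb.isUnit⟩
  simpa using (Ring.inverse_mul_eq_iff_eq_mul _ 1 _ hu).2 (by ext <;> simp [ha, hb])

theorem crossRatio_one_zero_negOne_one_zero_one (x y : BB) :
    crossRatio (1, 0) (-1, 1) (0, 1) (x, y) = x * Ring.inverse y := by
  have hden : pdet (1, 0) (x, y) * pdet (-1, 1) (0, 1) = y * ↑(-1 : BBˣ) := by
    simp [pdet]
  rw [crossRatio, hden, Ring.inverse_mul (Or.inr (Units.isUnit _)), Ring.inverse_unit]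
  simp [pdet]

/-- `cr([1,0],[-1,1],[0,1],Z[1,1]) = e^λ e⁺ + e^μ e⁻`, whose logarithm
`λe⁺ + μe⁻` equals `(λ+μ)/2 + τ(λ-μ)/2`. -/
theorem stmt16 (l m : ℝ) :
    crossRatio (1, 0) (-1, 1) (0, 1) (mobAct (zmat l m) (1, 1)) =
      Real.exp l • eplus + Real.exp m • eminus ∧
    l • eplus + m • eminus = bmk ((l + m) / 2) ((l - m) / 2) := by
  simp only [smul_eplus_add_smul_eminus]
  constructor
  · rw [zmat, mobAct_bmat_diagonal_one_one, crossRatio_one_zero_negOne_one_zero_one,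
      Ring.inverse_prod_mk (Real.exp_ne_zero _) (Real.exp_ne_zero _)]
    ext <;> simp [← div_eq_mul_inv, ← Real.exp_sub] <;> ring_nf
  · ext <;> simp [bmk] <;> ring
end
end

section
/- The map H : C⁺ × S¹ × R → R × (R² \ {0}) × R defined by H(a + τb, e^{iθ}, c) = (b, |a+τb|·√(1 - tanh²c)·cos θ, |a+τb|·√(1 - tanh²c)·sin θ, |a+τb|·tanh c) is a homeomorphism, with inverse H⁻¹(x,y,z,w) = (√(x²+y²+z²+w²) + τx, (y+iz)/√(y²+z²), arctanh(w/√(y²+z²+w²))). -/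
noncomputable section

/-- The inverse hyperbolic tangent, `arctanh x = (1/2)·log((1+x)/(1-x))`. -/
def arctanh (x : ℝ) : ℝ := Real.log ((1 + x) / (1 - x)) / 2

/-- The positive cone `C⁺`: space-like elements of `B` with positive real
part. -/
def Cplus : Type := {z : BB // 0 < bre z ∧ 0 < bnormSq z}

instance : TopologicalSpace Cplus := instTopologicalSpaceSubtype

/-!
Write `r = |a + τb| = √(a² - b²)`. Since `a² = b² + r²` and `a > 0`, an element of `C⁺` is
recovered from `b` and `r`. The remaining coordinates are hyperbolic spherical coordinates on
`(ℝ² ∖ 0) × ℝ`: as `√(1 - tanh² c)² + tanh² c = 1`, the point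
`(r √(1 - tanh² c) u, r tanh c)` has Euclidean norm `r`, its planar part has direction `u`, and
its last coordinate divided by `r` is `tanh c`. In the other direction `w / √(y² + z² + w²)`
lies in `(-1, 1)` because `(y, z) ≠ 0`, and `arctanh` is continuous there.
-/

open Real Set

@[fun_prop]
lemma Real.continuous_tanh : Continuous tanh := by
  refine (continuous_sinh.div continuous_cosh fun x => (cosh_pos x).ne').congr fun x => ?_
  exact (tanh_eq_sinh_div_cosh x).symm

lemma sqrt_one_sub_tanh_sq_pos (c : ℝ) : 0 < √(1 - tanh c ^ 2) :=
  sqrt_pos.2 (sub_pos.2 (tanh_sq_lt_one c))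

lemma arctanh_eq_artanh {x : ℝ} (hx : x ∈ Icc (-1) 1) : arctanh x = artanh x := by
  rw [arctanh, artanh_eq_half_log hx]
  ring

lemma arctanh_tanh (c : ℝ) : arctanh (tanh c) = c := by
  rw [arctanh_eq_artanh ⟨(neg_one_lt_tanh c).le, (tanh_lt_one c).le⟩, artanh_tanh]

lemma tanh_arctanh {x : ℝ} (hx : x ∈ Ioo (-1) 1) : tanh (arctanh x) = x := by
  rw [arctanh_eq_artanh (Ioo_subset_Icc_self hx), Real.tanh_artanh hx]

lemma continuousOn_arctanh : ContinuousOn arctanh (Ioo (-1) 1) := by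
  have hden : ∀ x ∈ Ioo (-1 : ℝ) 1, 1 - x ≠ 0 := fun x hx => by linarith [hx.2]
  refine ((ContinuousOn.div (by fun_prop) (by fun_prop) hden).log fun x hx => ?_).div_const 2
  exact (div_pos (by linarith [hx.1]) (by linarith [hx.2])).ne'

lemma abs_lt_sqrt_add_sq {s : ℝ} (hs : 0 < s) (w : ℝ) : |w| < √(s + w ^ 2) := by
  rw [← sqrt_sq_eq_abs]
  exact sqrt_lt_sqrt (sq_nonneg w) (by linarith)

lemma div_sqrt_add_sq_mem_Ioo {s : ℝ} (hs : 0 < s) (w : ℝ) :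
    w / √(s + w ^ 2) ∈ Ioo (-1) 1 := by
  have hlt := abs_lt_sqrt_add_sq hs w
  have hpos : 0 < √(s + w ^ 2) := (abs_nonneg w).trans_lt hlt
  rw [mem_Ioo, ← abs_lt, abs_div, abs_of_pos hpos, div_lt_one hpos]
  exact hlt

lemma sqrt_one_sub_div_sqrt_add_sq_sq {s : ℝ} (hs : 0 < s) (w : ℝ) :
    √(1 - (w / √(s + w ^ 2)) ^ 2) = √s / √(s + w ^ 2) := by
  have hsum : 0 < s + w ^ 2 := by positivity
  rw [← sqrt_div hs.le, div_pow, sq_sqrt hsum.le]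
  congr 1
  field_simp
  ring

lemma sq_add_sq_pos_of_ne_zero {v : ℝ × ℝ} (hv : v ≠ 0) : 0 < v.1 ^ 2 + v.2 ^ 2 := by
  obtain ⟨a, b⟩ := v
  simp only [ne_eq, Prod.mk_eq_zero, not_and_or] at hv
  obtain h | h := hv <;> positivity

lemma Circle.re_sq_add_im_sq (u : Circle) : (u : ℂ).re ^ 2 + (u : ℂ).im ^ 2 = 1 := by
  have h := Circle.normSq_coe u
  rw [Complex.normSq_apply] at h
  nlinarith

lemma Circle.mul_re_sq_add_mul_im_sq (t : ℝ) (u : Circle) :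
    (t * (u : ℂ).re) ^ 2 + (t * (u : ℂ).im) ^ 2 = t ^ 2 := by
  rw [mul_pow, mul_pow, ← mul_add, u.re_sq_add_im_sq, mul_one]

lemma Circle.sqrt_mul_re_sq_add_mul_im_sq {t : ℝ} (ht : 0 ≤ t) (u : Circle) :
    √((t * (u : ℂ).re) ^ 2 + (t * (u : ℂ).im) ^ 2) = t := by
  rw [u.mul_re_sq_add_mul_im_sq, sqrt_sq ht]

lemma Circle.mul_re_mul_im_ne_zero {t : ℝ} (ht : 0 < t) (u : Circle) :
    (t * (u : ℂ).re, t * (u : ℂ).im) ≠ 0 := by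
  intro h
  obtain ⟨hre, him⟩ := Prod.mk_eq_zero.1 h
  have := u.sqrt_mul_re_sq_add_mul_im_sq ht.le
  rw [hre, him] at this
  norm_num at this
  exact ht.ne this

lemma Circle.mul_re_add_mul_im_div_sqrt {t : ℝ} (ht : 0 < t) (u : Circle) :
    ((t * (u : ℂ).re : ℝ) + (t * (u : ℂ).im : ℝ) * Complex.I) /
      (√((t * (u : ℂ).re) ^ 2 + (t * (u : ℂ).im) ^ 2) : ℂ) = u := by
  rw [u.sqrt_mul_re_sq_add_mul_im_sq ht.le, div_eq_iff (Complex.ofReal_ne_zero.2 ht.ne')]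
  apply Complex.ext <;> simp [mul_comm]

lemma Circle.add_mul_I_div_sqrt_mem_unitSphere {v : ℝ × ℝ} (hv : v ≠ 0) :
    ((v.1 : ℂ) + v.2 * Complex.I) / (√(v.1 ^ 2 + v.2 ^ 2) : ℂ) ∈
      Submonoid.unitSphere ℂ := by
  have hpos : 0 < √(v.1 ^ 2 + v.2 ^ 2) := sqrt_pos.2 (sq_add_sq_pos_of_ne_zero hv)
  rw [Submonoid.unitSphere, Submonoid.mem_mk, Subsemigroup.mem_mk, mem_sphere_zero_iff_norm,
    norm_div, Complex.norm_add_mul_I, Complex.norm_real, norm_of_nonneg hpos.le, div_self hpos.ne']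

lemma bmk_bre_bim (z : BB) : bmk (bre z) (bim z) = z := by
  ext <;> simp only [bmk, bre, bim] <;> ring

lemma bim_bmk (a b : ℝ) : bim (bmk a b) = b := by
  simp only [bim, bmk]; ring

lemma bnormSq_bmk (a b : ℝ) : bnormSq (bmk a b) = a ^ 2 - b ^ 2 := by
  simp only [bnormSq, bmk]; ring

lemma bre_sq_eq_bim_sq_add_bnormSq (z : BB) : bre z ^ 2 = bim z ^ 2 + bnormSq z := by
  simp only [bre, bim, bnormSq]; ring

lemma bmk_mem_cplus {a b : ℝ} (h : |b| < a) : 0 < bre (bmk a b) ∧ 0 < bnormSq (bmk a b) := by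
  have ha : 0 < a := (abs_nonneg b).trans_lt h
  refine ⟨by simp only [bre, bmk]; linarith, ?_⟩
  rw [bnormSq_bmk, sub_pos]
  exact sq_lt_sq' (neg_lt_of_abs_lt h) (lt_of_abs_lt h)

lemma sqrt_bnormSq_pos (z : Cplus) : 0 < √(bnormSq z.1) := sqrt_pos.2 z.2.2

def toCartesian (p : Cplus × Circle × ℝ) : ℝ × {v : ℝ × ℝ // v ≠ 0} × ℝ :=
  (bim p.1.1,
   ⟨(√(bnormSq p.1.1) * √(1 - tanh p.2.2 ^ 2) * (p.2.1 : ℂ).re,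
     √(bnormSq p.1.1) * √(1 - tanh p.2.2 ^ 2) * (p.2.1 : ℂ).im),
    p.2.1.mul_re_mul_im_ne_zero <|
      mul_pos (sqrt_bnormSq_pos p.1) (sqrt_one_sub_tanh_sq_pos p.2.2)⟩,
   √(bnormSq p.1.1) * tanh p.2.2)

def fromCartesian (q : ℝ × {v : ℝ × ℝ // v ≠ 0} × ℝ) : Cplus × Circle × ℝ :=
  (⟨bmk (√(q.1 ^ 2 + (q.2.1 : ℝ × ℝ).1 ^ 2 + (q.2.1 : ℝ × ℝ).2 ^ 2 + q.2.2 ^ 2)) q.1,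
    bmk_mem_cplus <| by
      rw [show q.1 ^ 2 + (q.2.1 : ℝ × ℝ).1 ^ 2 + (q.2.1 : ℝ × ℝ).2 ^ 2 + q.2.2 ^ 2 =
        ((q.2.1 : ℝ × ℝ).1 ^ 2 + (q.2.1 : ℝ × ℝ).2 ^ 2 + q.2.2 ^ 2) + q.1 ^ 2 by ring]
      exact abs_lt_sqrt_add_sq (by have := sq_add_sq_pos_of_ne_zero q.2.1.2; positivity) q.1⟩,
   ⟨(((q.2.1 : ℝ × ℝ).1 : ℂ) + ((q.2.1 : ℝ × ℝ).2 : ℂ) * Complex.I) /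
      (√((q.2.1 : ℝ × ℝ).1 ^ 2 + (q.2.1 : ℝ × ℝ).2 ^ 2) : ℂ),
    Circle.add_mul_I_div_sqrt_mem_unitSphere q.2.1.2⟩,
   arctanh (q.2.2 / √((q.2.1 : ℝ × ℝ).1 ^ 2 + (q.2.1 : ℝ × ℝ).2 ^ 2 + q.2.2 ^ 2)))

lemma continuous_toCartesian : Continuous toCartesian := by
  unfold toCartesian bim bnormSq
  fun_prop

lemma continuous_fromCartesian : Continuous fromCartesian := by
  have hm (q : ℝ × {v : ℝ × ℝ // v ≠ 0} × ℝ) :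
      0 < (q.2.1 : ℝ × ℝ).1 ^ 2 + (q.2.1 : ℝ × ℝ).2 ^ 2 :=
    sq_add_sq_pos_of_ne_zero q.2.1.2
  have hw : Continuous fun q : ℝ × {v : ℝ × ℝ // v ≠ 0} × ℝ =>
      q.2.2 / √((q.2.1 : ℝ × ℝ).1 ^ 2 + (q.2.1 : ℝ × ℝ).2 ^ 2 + q.2.2 ^ 2) :=
    Continuous.div (by fun_prop) (by fun_prop) fun q => by have := hm q; positivity
  have hc : Continuous fun q : ℝ × {v : ℝ × ℝ // v ≠ 0} × ℝ =>
      arctanh (q.2.2 / √((q.2.1 : ℝ × ℝ).1 ^ 2 + (q.2.1 : ℝ × ℝ).2 ^ 2 + q.2.2 ^ 2)) :=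
    continuousOn_arctanh.comp_continuous hw fun q => div_sqrt_add_sq_mem_Ioo (hm q) _
  have hu : Continuous fun q : ℝ × {v : ℝ × ℝ // v ≠ 0} × ℝ =>
      (((q.2.1 : ℝ × ℝ).1 : ℂ) + ((q.2.1 : ℝ × ℝ).2 : ℂ) * Complex.I) /
        (√((q.2.1 : ℝ × ℝ).1 ^ 2 + (q.2.1 : ℝ × ℝ).2 ^ 2) : ℂ) :=
    Continuous.div (by fun_prop) (by fun_prop) fun q =>
      Complex.ofReal_ne_zero.2 (sqrt_pos.2 (hm q)).ne'
  unfold fromCartesian bmk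
  fun_prop

lemma fromCartesian_toCartesian (p : Cplus × Circle × ℝ) :
    fromCartesian (toCartesian p) = p := by
  obtain ⟨⟨z, hre, hnorm⟩, u, c⟩ := p
  set r := √(bnormSq z)
  set s := √(1 - tanh c ^ 2)
  have hr : 0 < r := sqrt_pos.2 hnorm
  have hrs : 0 < r * s := mul_pos hr (sqrt_one_sub_tanh_sq_pos c)
  have hr2 : r ^ 2 = bnormSq z := sq_sqrt hnorm.le
  have hs2 : s ^ 2 = 1 - tanh c ^ 2 := sq_sqrt (sub_pos.2 (tanh_sq_lt_one c)).le
  have hsum : (r * s * (u : ℂ).re) ^ 2 + (r * s * (u : ℂ).im) ^ 2 + (r * tanh c) ^ 2 =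
      bnormSq z := by
    rw [u.mul_re_sq_add_mul_im_sq]
    linear_combination r ^ 2 * hs2 + hr2
  refine Prod.ext (Subtype.ext ?_) (Prod.ext (Circle.ext ?_) ?_)
  · change bmk √(bim z ^ 2 + (r * s * (u : ℂ).re) ^ 2 + (r * s * (u : ℂ).im) ^ 2 +
      (r * tanh c) ^ 2) (bim z) = z
    rw [show bim z ^ 2 + (r * s * (u : ℂ).re) ^ 2 + (r * s * (u : ℂ).im) ^ 2 +
        (r * tanh c) ^ 2 = bre z ^ 2 by rw [bre_sq_eq_bim_sq_add_bnormSq, ← hsum]; ring,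
      sqrt_sq hre.le, bmk_bre_bim]
  · exact u.mul_re_add_mul_im_div_sqrt hrs
  · change arctanh (r * tanh c / √((r * s * (u : ℂ).re) ^ 2 + (r * s * (u : ℂ).im) ^ 2 +
      (r * tanh c) ^ 2)) = c
    rw [hsum, mul_div_cancel_left₀ _ hr.ne', arctanh_tanh]

lemma toCartesian_fromCartesian (q : ℝ × {v : ℝ × ℝ // v ≠ 0} × ℝ) :
    toCartesian (fromCartesian q) = q := by
  obtain ⟨x, ⟨⟨y, z⟩, hv⟩, w⟩ := q
  have hyz : 0 < y ^ 2 + z ^ 2 := sq_add_sq_pos_of_ne_zero hv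
  set ρ := √(y ^ 2 + z ^ 2 + w ^ 2)
  set m := √(y ^ 2 + z ^ 2)
  have hρ : 0 < ρ := sqrt_pos.2 (by positivity)
  have hnorm : √(bnormSq (bmk √(x ^ 2 + y ^ 2 + z ^ 2 + w ^ 2) x)) = ρ := by
    rw [bnormSq_bmk, sq_sqrt (by positivity),
      show x ^ 2 + y ^ 2 + z ^ 2 + w ^ 2 - x ^ 2 = y ^ 2 + z ^ 2 + w ^ 2 by ring]
  have htanh : tanh (arctanh (w / ρ)) = w / ρ := tanh_arctanh (div_sqrt_add_sq_mem_Ioo hyz w)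
  have hsech : √(1 - tanh (arctanh (w / ρ)) ^ 2) = m / ρ := by
    rw [htanh]
    exact sqrt_one_sub_div_sqrt_add_sq_sq hyz w
  refine Prod.ext (bim_bmk _ _) (Prod.ext (Subtype.ext ?_) ?_) <;>
    dsimp only [toCartesian, fromCartesian]
  · rw [hnorm, hsech, Complex.div_ofReal_re, Complex.div_ofReal_im]
    simp only [Complex.add_re, Complex.ofReal_re, Complex.mul_re, Complex.I_re, Complex.I_im,
      Complex.ofReal_im, Complex.add_im, Complex.mul_im]
    ext <;> field_simp <;> ring
  · rw [hnorm, htanh, mul_div_cancel₀ _ hρ.ne']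

def cartesianHomeomorph : Cplus × Circle × ℝ ≃ₜ ℝ × {v : ℝ × ℝ // v ≠ 0} × ℝ where
  toFun := toCartesian
  invFun := fromCartesian
  left_inv := fromCartesian_toCartesian
  right_inv := toCartesian_fromCartesian
  continuous_toFun := continuous_toCartesian
  continuous_invFun := continuous_fromCartesian

/-- The map `H : C⁺ × S¹ × ℝ → ℝ × (ℝ²\{0}) × ℝ`,
`H(a+τb, e^{iθ}, c) = (b, |a+τb|√(1-tanh²c)cosθ, |a+τb|√(1-tanh²c)sinθ,
|a+τb|·tanh c)`, is a homeomorphism with inverse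
`H⁻¹(x,y,z,w) = (√(x²+y²+z²+w²) + τx, (y+iz)/√(y²+z²),
arctanh(w/√(y²+z²+w²)))`. -/
theorem stmt17 :
    ∃ H : Cplus × Circle × ℝ ≃ₜ ℝ × {v : ℝ × ℝ // v ≠ 0} × ℝ,
      (∀ (z : Cplus) (u : Circle) (c : ℝ),
        (H (z, u, c)).1 = bim z.1 ∧
        ((H (z, u, c)).2.1 : ℝ × ℝ) =
          (Real.sqrt (bnormSq z.1) * Real.sqrt (1 - Real.tanh c ^ 2) *
              (u : ℂ).re,
            Real.sqrt (bnormSq z.1) * Real.sqrt (1 - Real.tanh c ^ 2) *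
              (u : ℂ).im) ∧
        (H (z, u, c)).2.2 = Real.sqrt (bnormSq z.1) * Real.tanh c) ∧
      (∀ (x : ℝ) (v : {v : ℝ × ℝ // v ≠ 0}) (w : ℝ),
        ((H.symm (x, v, w)).1).1 =
          bmk (Real.sqrt (x ^ 2 + (v : ℝ × ℝ).1 ^ 2 + (v : ℝ × ℝ).2 ^ 2 +
            w ^ 2)) x ∧
        ((H.symm (x, v, w)).2.1 : ℂ) =
          (((v : ℝ × ℝ).1 : ℂ) + ((v : ℝ × ℝ).2 : ℂ) * Complex.I) /
            (Real.sqrt ((v : ℝ × ℝ).1 ^ 2 + (v : ℝ × ℝ).2 ^ 2) : ℂ) ∧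
        (H.symm (x, v, w)).2.2 =
          arctanh (w / Real.sqrt ((v : ℝ × ℝ).1 ^ 2 + (v : ℝ × ℝ).2 ^ 2 +
            w ^ 2))) :=
  ⟨cartesianHomeomorph, fun _ _ _ => ⟨rfl, rfl, rfl⟩, fun _ _ _ => ⟨rfl, rfl, rfl⟩⟩
end
end
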